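/- arXiv:1104.0372 — 4 statements merged into one kernel-verified Lean document; each statement's English description precedes it below -/
import Mathlib

section
/- Let p ≥ 3 be a real number, let X_1,…,X_n be independent symmetric real random variables with E X_i^2 = 1, and let ε_1,…,ε_n be independent Rademacher random variables (taking values ±1 with probability 1/2 each). Then for all real coefficients a_1,…,a_n, (E|∑_{i=1}^n a_i ε_i|^p)^{1/p} ≤ (E|∑_{i=1}^n a_i X_i|^p)^{1/p}. -/
/-!
Replacing the `Xᵢ` by Rademacher signs one coordinate at a time (conditioning on the others), it
suffices to show `E|c + a ε|^p ≤ E|c + a X|^p` for every shift `c`, weight `a` and symmetric `X`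
with `E X² = 1`. By symmetry the two sides are `f 1 / 2` and `E f(X) / 2`, where
`f s = |c + a s|^p + |c - a s|^p`. Since `f''(s)` is a multiple of
`|c + a s|^(p-2) + |c - a s|^(p-2)`, which is nondecreasing in `s ≥ 0` when `|·|^(p-2)` is
convex, i.e. when `p ≥ 3`, the derivative `f'` is convex on `[0, ∞)` and vanishes at `0`. This
makes `u ↦ f (√u)` convex, and its tangent line at `u = 1`, averaged against `E X² = 1`, gives
`E f(X) ≥ f 1`.
-/
open MeasureTheory ProbabilityTheory Real
open scoped ENNReal

/-- The law of a Rademacher random variable: values `±1` with probability `1/2` each. -/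
noncomputable def rademacherLaw : Measure ℝ :=
  ((1 : ℝ≥0∞) / 2) • Measure.dirac (1 : ℝ) + ((1 : ℝ≥0∞) / 2) • Measure.dirac (-1 : ℝ)

/-- A random variable is symmetric if `X` and `-X` have the same distribution. -/
def IsSymmetricRV {Ω : Type*} [MeasurableSpace Ω] (X : Ω → ℝ) (μ : Measure Ω) : Prop :=
  Measure.map X μ = Measure.map (fun ω => -(X ω)) μ

open Set

section RealAnalysis

theorem hasDerivAt_mul_abs_rpow {q : ℝ} (hq : 0 ≤ q) (x : ℝ) :
    HasDerivAt (fun u : ℝ => u * |u| ^ q) ((q + 1) * |x| ^ q) x := by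
  have hcont : Continuous fun u : ℝ => |u| ^ q := continuous_abs.rpow_const fun _ => Or.inr hq
  refine hasDerivAt_of_hasDerivAt_of_ne' (g := fun u => (q + 1) * |u| ^ q) (x := 0)
    (fun y hy => ?_) (continuous_id.mul hcont).continuousAt
    (continuous_const.mul hcont).continuousAt x
  refine ((hasDerivAt_id' y).mul
    ((hasDerivAt_abs hy).rpow_const (p := q) (Or.inl (abs_ne_zero.2 hy)))).congr_deriv ?_
  rw [Real.rpow_sub_one (abs_ne_zero.2 hy)]
  field_simp
  rw [self_mul_sign]
  ring

theorem monotone_mul_abs_rpow {q : ℝ} (hq : 0 ≤ q) : Monotone fun u : ℝ => u * |u| ^ q :=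
  monotone_of_hasDerivAt_nonneg (hasDerivAt_mul_abs_rpow hq) fun u => by positivity

theorem convexOn_abs_rpow {q : ℝ} (hq : 1 ≤ q) : ConvexOn ℝ univ fun u : ℝ => |u| ^ q := by
  refine ⟨convex_univ, fun x _ y _ s t hs ht hst => ?_⟩
  calc |s • x + t • y| ^ q ≤ (s * |x| + t * |y|) ^ q := by
        gcongr
        simpa [abs_mul, abs_of_nonneg hs, abs_of_nonneg ht] using abs_add_le (s * x) (t * y)
    _ ≤ s • |x| ^ q + t • |y| ^ q :=
        (convexOn_rpow hq).2 (abs_nonneg x) (abs_nonneg y) hs ht hst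

theorem ConvexOn.monotoneOn_add_comp_sub {ψ : ℝ → ℝ} (hψ : ConvexOn ℝ univ ψ) (c : ℝ) :
    MonotoneOn (fun t => ψ (c + t) + ψ (c - t)) (Ici 0) := by
  intro s hs t ht hst
  simp only [mem_Ici] at hs ht
  rcases ht.eq_or_lt with rfl | ht0
  · rw [le_antisymm hst hs]
  -- `c ± s` are the convex combinations of `c + t` and `c - t` with weights `(t ± s) / 2t`
  have hα : 0 ≤ (t + s) / (2 * t) := by positivity
  have hβ : 0 ≤ (t - s) / (2 * t) := div_nonneg (by linarith) (by positivity)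
  have hαβ : (t + s) / (2 * t) + (t - s) / (2 * t) = 1 := by field_simp; ring
  have hplus := hψ.2 (mem_univ (c + t)) (mem_univ (c - t)) hα hβ hαβ
  have hminus := hψ.2 (mem_univ (c + t)) (mem_univ (c - t)) hβ hα (by linarith)
  simp only [smul_eq_mul] at hplus hminus
  have eplus : (t + s) / (2 * t) * (c + t) + (t - s) / (2 * t) * (c - t) = c + s := by
    field_simp; ring
  have eminus : (t - s) / (2 * t) * (c + t) + (t + s) / (2 * t) * (c - t) = c - s := by
    field_simp; ring
  rw [eplus] at hplus
  rw [eminus] at hminus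
  linear_combination hplus + hminus + (ψ (c + t) + ψ (c - t)) * hαβ

theorem convexOn_Ici_mul_abs_rpow_add_sub_mul_abs_rpow_sub {q : ℝ} (hq : 1 ≤ q) (c : ℝ) :
    ConvexOn ℝ (Ici 0) fun t => (c + t) * |c + t| ^ q - (c - t) * |c - t| ^ q := by
  have hderiv : ∀ t, HasDerivAt (fun t => (c + t) * |c + t| ^ q - (c - t) * |c - t| ^ q)
      ((q + 1) * (|c + t| ^ q + |c - t| ^ q)) t := fun t => by
    have hplus := (hasDerivAt_mul_abs_rpow (by linarith) (c + t)).comp t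
      ((hasDerivAt_id' t).const_add c)
    have hminus := (hasDerivAt_mul_abs_rpow (by linarith) (c - t)).comp t
      ((hasDerivAt_id' t).const_sub c)
    exact (hplus.sub hminus).congr_deriv (by ring)
  refine MonotoneOn.convexOn_of_deriv (convex_Ici 0)
    (fun t _ => (hderiv t).continuousAt.continuousWithinAt)
    (fun t _ => (hderiv t).differentiableAt.differentiableWithinAt) ?_
  rw [interior_Ici]
  intro s hs t ht hst
  rw [(hderiv s).deriv, (hderiv t).deriv]
  have := (convexOn_abs_rpow hq).monotoneOn_add_comp_sub c (mem_Ici_of_Ioi hs)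
    (mem_Ici_of_Ioi ht) hst
  simp only at this
  gcongr

/-- The tangent line at `u = 1` of the convex function `u ↦ f (√u)`. -/
theorem tangent_sq_le_of_convexOn_deriv {f f' : ℝ → ℝ} (hf : ∀ s, HasDerivAt f (f' s) s)
    (hconv : ConvexOn ℝ (Ici 0) f') (h0 : f' 0 = 0) {s : ℝ} (hs : 0 ≤ s) :
    f 1 + f' 1 / 2 * (s ^ 2 - 1) ≤ f s := by
  set D : ℝ → ℝ := fun s => f s - f' 1 / 2 * s ^ 2
  have hD : ∀ s, HasDerivAt D (f' s - f' 1 * s) s := fun s => by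
    refine ((hf s).sub ((hasDerivAt_pow 2 s).const_mul (f' 1 / 2))).congr_deriv ?_
    push_cast
    ring
  have hDcont : Continuous D := continuous_iff_continuousAt.2 fun s => (hD s).continuousAt
  have below : ∀ s ∈ Icc (0 : ℝ) 1, f' s ≤ f' 1 * s := fun s hs => by
    have := hconv.2 (mem_Ici.2 le_rfl) (mem_Ici.2 zero_le_one) (sub_nonneg.2 hs.2) hs.1
      (by ring)
    simpa [h0, mul_comm] using this
  have above : ∀ s ∈ Ici (1 : ℝ), f' 1 * s ≤ f' s := fun s hs => by
    have hs0 : 0 < s := zero_lt_one.trans_le hs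
    have := hconv.2 (mem_Ici.2 le_rfl) (mem_Ici.2 hs0.le)
      (sub_nonneg.2 (inv_le_one_of_one_le₀ hs)) (inv_nonneg.2 hs0.le) (by ring)
    simp only [smul_eq_mul, mul_zero, zero_add, h0, inv_mul_cancel₀ hs0.ne'] at this
    rw [le_inv_mul_iff₀ hs0] at this
    linarith
  have hanti : AntitoneOn D (Icc 0 1) :=
    antitoneOn_of_hasDerivWithinAt_nonpos (convex_Icc 0 1) hDcont.continuousOn
      (fun s _ => (hD s).hasDerivWithinAt)
      (fun s hs => sub_nonpos.2 (below s (interior_subset hs)))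
  have hmono : MonotoneOn D (Ici 1) :=
    monotoneOn_of_hasDerivWithinAt_nonneg (convex_Ici 1) hDcont.continuousOn
      (fun s _ => (hD s).hasDerivWithinAt)
      (fun s hs => sub_nonneg.2 (above s (interior_subset hs)))
  have hmin : D 1 ≤ D s := by
    rcases le_total s 1 with h | h
    · exact hanti ⟨hs, h⟩ ⟨zero_le_one, le_rfl⟩ h
    · exact hmono (mem_Ici.2 le_rfl) h h
  simp only [D] at hmin
  linarith

theorem abs_rpow_add_abs_rpow_tangent_of_nonneg {p : ℝ} (hp : 3 ≤ p) (c : ℝ) {a x : ℝ}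
    (ha : 0 ≤ a) (hx : 0 ≤ x) :
    |c + a| ^ p + |c - a| ^ p
        + p * a * ((c + a) * |c + a| ^ (p - 2) - (c - a) * |c - a| ^ (p - 2)) / 2 * (x ^ 2 - 1)
      ≤ |c + a * x| ^ p + |c - a * x| ^ p := by
  have hderiv : ∀ s, HasDerivAt (fun s => |c + a * s| ^ p + |c - a * s| ^ p)
      (p * a * ((c + a * s) * |c + a * s| ^ (p - 2) - (c - a * s) * |c - a * s| ^ (p - 2))) s :=
    fun s => by
      have hplus := (hasDerivAt_abs_rpow (c + a * s) (p := p) (by linarith)).comp s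
        (((hasDerivAt_id' s).const_mul a).const_add c)
      have hminus := (hasDerivAt_abs_rpow (c - a * s) (p := p) (by linarith)).comp s
        (((hasDerivAt_id' s).const_mul a).const_sub c)
      exact (hplus.add hminus).congr_deriv (by ring)
  have hconv : ConvexOn ℝ (Ici 0) fun s =>
      p * a * ((c + a * s) * |c + a * s| ^ (p - 2) - (c - a * s) * |c - a * s| ^ (p - 2)) :=
    (((convexOn_Ici_mul_abs_rpow_add_sub_mul_abs_rpow_sub (by linarith) c).comp_linearMap
      (LinearMap.mul ℝ ℝ a)).subset (fun s hs => mul_nonneg ha hs) (convex_Ici 0)).smul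
      (by positivity : 0 ≤ p * a)
  have := tangent_sq_le_of_convexOn_deriv hderiv hconv (by simp) hx
  simp only [mul_one] at this
  linarith

theorem abs_rpow_add_abs_rpow_tangent {p : ℝ} (hp : 3 ≤ p) (c a x : ℝ) :
    |c + a| ^ p + |c - a| ^ p
        + p * a * ((c + a) * |c + a| ^ (p - 2) - (c - a) * |c - a| ^ (p - 2)) / 2 * (x ^ 2 - 1)
      ≤ |c + a * x| ^ p + |c - a * x| ^ p := by
  have h := abs_rpow_add_abs_rpow_tangent_of_nonneg hp c (abs_nonneg a) (abs_nonneg x)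
  rw [sq_abs, ← abs_mul] at h
  rcases abs_choice a with ha | ha <;> rcases abs_choice (a * x) with hax | hax <;>
    rw [ha, hax] at h <;> try simp only [← sub_eq_add_neg, sub_neg_eq_add] at h
  all_goals linarith

end RealAnalysis

section OneCoordinate

theorem lintegral_rademacherLaw (g : ℝ → ℝ≥0∞) :
    ∫⁻ x, g x ∂rademacherLaw = 2⁻¹ * g 1 + 2⁻¹ * g (-1) := by
  simp [rademacherLaw, lintegral_add_measure, lintegral_smul_measure, lintegral_dirac]

theorem lintegral_rademacherLaw_le {p : ℝ} (hp : 3 ≤ p) {ρ : Measure ℝ}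
    [IsProbabilityMeasure ρ] (hsymm : ρ.map (fun x => -x) = ρ) (hvar : ∫ x, x ^ 2 ∂ρ = 1)
    (c a : ℝ) :
    ∫⁻ x, ‖c + a * x‖ₑ ^ p ∂rademacherLaw ≤ ∫⁻ x, ‖c + a * x‖ₑ ^ p ∂ρ := by
  have hp0 : 0 ≤ p := by linarith
  -- `κ = f'(1) / 2` for `f s = |c + a s|^p + |c - a s|^p`; as `κ ≥ 0`, the tangent inequality
  -- can be integrated in `ℝ≥0∞`, with no integrability assumption on `|c + a X|^p`
  set κ := p * a * ((c + a) * |c + a| ^ (p - 2) - (c - a) * |c - a| ^ (p - 2)) / 2 with hκ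
  have hκ0 : 0 ≤ κ := by
    have hφ := monotone_mul_abs_rpow (q := p - 2) (by linarith)
    have : 0 ≤ a * ((c + a) * |c + a| ^ (p - 2) - (c - a) * |c - a| ^ (p - 2)) := by
      rcases le_total 0 a with ha | ha
      · exact mul_nonneg ha (sub_nonneg.2 (hφ (by linarith)))
      · exact mul_nonneg_of_nonpos_of_nonpos ha (sub_nonpos.2 (hφ (by linarith)))
    rw [hκ, mul_assoc]
    positivity
  have hsq : ∫⁻ x, ENNReal.ofReal (x ^ 2) ∂ρ = 1 := by
    rw [← ofReal_integral_eq_lintegral_ofReal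
      (Integrable.of_integral_ne_zero (by rw [hvar]; norm_num))
      (Filter.Eventually.of_forall fun x => sq_nonneg x), hvar, ENNReal.ofReal_one]
  have henorm : ∀ y : ℝ, ‖y‖ₑ ^ p = ENNReal.ofReal (|y| ^ p) := fun y => by
    rw [Real.enorm_eq_ofReal_abs, ENNReal.ofReal_rpow_of_nonneg (abs_nonneg y) hp0]
  have htangent : ∀ x, ‖c + a‖ₑ ^ p + ‖c - a‖ₑ ^ p + ENNReal.ofReal κ * ENNReal.ofReal (x ^ 2)
      ≤ ‖c + a * x‖ₑ ^ p + ‖c - a * x‖ₑ ^ p + ENNReal.ofReal κ := fun x => by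
    simp only [henorm]
    rw [← ENNReal.ofReal_mul hκ0, ← ENNReal.ofReal_add, ← ENNReal.ofReal_add,
      ← ENNReal.ofReal_add, ← ENNReal.ofReal_add]
    · exact ENNReal.ofReal_le_ofReal (by linear_combination abs_rpow_add_abs_rpow_tangent hp c a x)
    all_goals positivity
  have hreflect : ∫⁻ x, ‖c - a * x‖ₑ ^ p ∂ρ = ∫⁻ x, ‖c + a * x‖ₑ ^ p ∂ρ := by
    conv_rhs => rw [← hsymm]
    rw [lintegral_map (by fun_prop) measurable_neg]
    simp [← sub_eq_add_neg]
  have hρ : ∫⁻ x, ‖c + a * x‖ₑ ^ p ∂ρ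
      = 2⁻¹ * ∫⁻ x, (‖c + a * x‖ₑ ^ p + ‖c - a * x‖ₑ ^ p) ∂ρ := by
    rw [lintegral_add_right _ (by fun_prop), hreflect, ← two_mul, ← mul_assoc,
      ENNReal.inv_mul_cancel two_ne_zero ENNReal.ofNat_ne_top, one_mul]
  rw [lintegral_rademacherLaw, hρ, ← mul_add]
  gcongr
  refine ENNReal.le_of_add_le_add_right (a := ENNReal.ofReal κ) ENNReal.ofReal_ne_top ?_
  calc ‖c + a * 1‖ₑ ^ p + ‖c + a * -1‖ₑ ^ p + ENNReal.ofReal κ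
      = ∫⁻ x, (‖c + a‖ₑ ^ p + ‖c - a‖ₑ ^ p + ENNReal.ofReal κ * ENNReal.ofReal (x ^ 2)) ∂ρ := by
        rw [lintegral_add_left measurable_const, lintegral_const_mul _ (by fun_prop), hsq]
        simp [← sub_eq_add_neg]
    _ ≤ ∫⁻ x, (‖c + a * x‖ₑ ^ p + ‖c - a * x‖ₑ ^ p + ENNReal.ofReal κ) ∂ρ :=
        lintegral_mono htangent
    _ = ∫⁻ x, (‖c + a * x‖ₑ ^ p + ‖c - a * x‖ₑ ^ p) ∂ρ + ENNReal.ofReal κ := by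
        rw [lintegral_add_right _ measurable_const]
        simp

theorem IsSymmetricRV.lintegral_rademacherLaw_le_map {Ω : Type*} [MeasurableSpace Ω]
    {μ : Measure Ω} [IsProbabilityMeasure μ] {X : Ω → ℝ} (hsymm : IsSymmetricRV X μ)
    (hX : Measurable X) (hvar : ∫ ω, X ω ^ 2 ∂μ = 1) {p : ℝ} (hp : 3 ≤ p) (c a : ℝ) :
    ∫⁻ x, ‖c + a * x‖ₑ ^ p ∂rademacherLaw ≤ ∫⁻ x, ‖c + a * x‖ₑ ^ p ∂(μ.map X) := by
  have := Measure.isProbabilityMeasure_map (μ := μ) hX.aemeasurable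
  refine lintegral_rademacherLaw_le hp ?_ ?_ c a
  · rw [Measure.map_map measurable_neg hX]
    exact hsymm.symm
  · rwa [integral_map hX.aemeasurable (by fun_prop)]

end OneCoordinate

section Independence

open Finset Function

theorem ProbabilityTheory.IndepFun.lintegral_comp_eq_lintegral_lintegral_map
    {Ω α β : Type*} [MeasurableSpace Ω] [MeasurableSpace α] [MeasurableSpace β]
    {P : Measure Ω} [IsFiniteMeasure P] {T : Ω → α} {Z : Ω → β} (hTZ : IndepFun T Z P)
    (hT : Measurable T) (hZ : Measurable Z) {f : α × β → ℝ≥0∞} (hf : Measurable f) :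
    ∫⁻ ω, f (T ω, Z ω) ∂P = ∫⁻ ω, ∫⁻ z, f (T ω, z) ∂(P.map Z) ∂P := by
  rw [← lintegral_map (f := fun ω => ∫⁻ z, f (ω, z) ∂(P.map Z)) hf.lintegral_prod_right' hT,
    ← lintegral_prod f hf.aemeasurable,
    ← (indepFun_iff_map_prod_eq_prod_map_map hT.aemeasurable hZ.aemeasurable).1 hTZ,
    lintegral_map hf (hT.prodMk hZ)]

theorem lintegral_comp_add_sum_insert {Ω ι : Type*} [MeasurableSpace Ω] [DecidableEq ι]
    {P : Measure Ω} [IsFiniteMeasure P] {Y : ι → Ω → ℝ} (hY : ∀ i, Measurable (Y i))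
    (hind : iIndepFun Y P) (a : ι → ℝ) {g : ℝ → ℝ≥0∞} (hg : Measurable g) (b : ℝ)
    {s : Finset ι} {j : ι} (hj : j ∉ s) :
    ∫⁻ ω, g (b + ∑ i ∈ insert j s, a i * Y i ω) ∂P
      = ∫⁻ ω, ∫⁻ x, g (b + ∑ i ∈ s, a i * Y i ω + a j * x) ∂(P.map (Y j)) ∂P := by
  have hindep : IndepFun (fun ω => b + ∑ i ∈ s, a i * Y i ω) (Y j) P := by
    have hφ : Measurable fun v : s → ℝ => b + ∑ i : s, a i * v i := by fun_prop
    have hψ : Measurable fun v : ({j} : Finset ι) → ℝ => v ⟨j, mem_singleton_self j⟩ :=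
      measurable_pi_apply _
    convert (hind.indepFun_finset s {j} (disjoint_singleton_right.2 hj) hY).comp hφ hψ using 1
    · funext ω
      exact congrArg (b + ·) (sum_coe_sort s fun i => a i * Y i ω).symm
    · rfl
  rw [← hindep.lintegral_comp_eq_lintegral_lintegral_map (by fun_prop) (hY j)
    (f := fun z => g (z.1 + a j * z.2)) (by fun_prop)]
  congr with ω
  rw [sum_insert hj, add_comm (a j * Y j ω), add_assoc]

theorem lintegral_comp_add_sum_le {Ω Ω' ι : Type*} [MeasurableSpace Ω] [MeasurableSpace Ω']
    {μ : Measure Ω} {ν : Measure Ω'} [IsProbabilityMeasure μ] [IsProbabilityMeasure ν]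
    {X : ι → Ω → ℝ} {Y : ι → Ω' → ℝ} (hX : ∀ i, Measurable (X i)) (hXind : iIndepFun X μ)
    (hY : ∀ i, Measurable (Y i)) (hYind : iIndepFun Y ν) (a : ι → ℝ) {g : ℝ → ℝ≥0∞}
    (hg : Measurable g)
    (hdom : ∀ j c, ∫⁻ x, g (c + a j * x) ∂(ν.map (Y j)) ≤ ∫⁻ x, g (c + a j * x) ∂(μ.map (X j)))
    (s : Finset ι) (b : ℝ) :
    ∫⁻ ω, g (b + ∑ i ∈ s, a i * Y i ω) ∂ν ≤ ∫⁻ ω, g (b + ∑ i ∈ s, a i * X i ω) ∂μ := by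
  classical
  induction s using Finset.induction_on generalizing b with
  | empty => simp
  | insert j s hj ih =>
    calc ∫⁻ ω, g (b + ∑ i ∈ insert j s, a i * Y i ω) ∂ν
        = ∫⁻ ω, ∫⁻ x, g (b + ∑ i ∈ s, a i * Y i ω + a j * x) ∂(ν.map (Y j)) ∂ν :=
          lintegral_comp_add_sum_insert hY hYind a hg b hj
      _ = ∫⁻ x, ∫⁻ ω, g (b + a j * x + ∑ i ∈ s, a i * Y i ω) ∂ν ∂(ν.map (Y j)) := by
          rw [lintegral_lintegral_swap (by fun_prop)]
          simp only [add_right_comm b]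
      _ ≤ ∫⁻ x, ∫⁻ ω, g (b + a j * x + ∑ i ∈ s, a i * X i ω) ∂μ ∂(ν.map (Y j)) :=
          lintegral_mono fun x => ih _
      _ = ∫⁻ ω, ∫⁻ x, g (b + ∑ i ∈ s, a i * X i ω + a j * x) ∂(ν.map (Y j)) ∂μ := by
          rw [lintegral_lintegral_swap (by fun_prop)]
          simp only [add_right_comm b]
      _ ≤ ∫⁻ ω, ∫⁻ x, g (b + ∑ i ∈ s, a i * X i ω + a j * x) ∂(μ.map (X j)) ∂μ :=
          lintegral_mono fun ω => hdom j _
      _ = ∫⁻ ω, g (b + ∑ i ∈ insert j s, a i * X i ω) ∂μ :=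
          (lintegral_comp_add_sum_insert hX hXind a hg b hj).symm

end Independence

/-- for `p ≥ 3`, independent symmetric `X_i` with `E X_i^2 = 1`, and
independent Rademacher `ε_i`, one has `‖∑ aᵢ εᵢ‖_p ≤ ‖∑ aᵢ Xᵢ‖_p`
(norms taken in `ℝ≥0∞` via `eLpNorm`). -/
theorem stmt0
    {Ω Ω' : Type*} [MeasurableSpace Ω] [MeasurableSpace Ω']
    (μ : Measure Ω) (ν : Measure Ω') [IsProbabilityMeasure μ] [IsProbabilityMeasure ν]
    (p : ℝ) (hp : 3 ≤ p) (n : ℕ)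
    (X : ℕ → Ω → ℝ) (hXmeas : ∀ i, Measurable (X i))
    (hXindep : iIndepFun X μ)
    (hXsymm : ∀ i, IsSymmetricRV (X i) μ)
    (hXvar : ∀ i, ∫ ω, (X i ω) ^ 2 ∂μ = 1)
    (ε : ℕ → Ω' → ℝ) (hεmeas : ∀ i, Measurable (ε i))
    (hεindep : iIndepFun ε ν)
    (hεlaw : ∀ i, Measure.map (ε i) ν = rademacherLaw)
    (a : ℕ → ℝ) :
    eLpNorm (fun ω' => ∑ i ∈ Finset.Icc 1 n, a i * ε i ω') (ENNReal.ofReal p) ν ≤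
      eLpNorm (fun ω => ∑ i ∈ Finset.Icc 1 n, a i * X i ω) (ENNReal.ofReal p) μ := by
  have hp0 : 0 < p := by linarith
  have hcomp := lintegral_comp_add_sum_le hXmeas hXindep hεmeas hεindep a
    (g := fun y => ‖y‖ₑ ^ p) (by fun_prop)
    (fun j c => hεlaw j ▸ (hXsymm j).lintegral_rademacherLaw_le_map (hXmeas j) (hXvar j) hp c (a j))
    (Finset.Icc 1 n) 0
  simp only [zero_add] at hcomp
  rw [eLpNorm_eq_lintegral_rpow_enorm_toReal (by simpa using hp0) ENNReal.ofReal_ne_top,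
    eLpNorm_eq_lintegral_rpow_enorm_toReal (by simpa using hp0) ENNReal.ofReal_ne_top,
    ENNReal.toReal_ofReal hp0.le]
  gcongr
end

section
/- Let a_1,…,a_n be real numbers with |a_1| ≥ |a_2| ≥ … ≥ |a_n|. Then for every real number t: ∏_{i=1}^n cos(a_i t) + (1/2) a_1^2 t^2 ≥ ∏_{i=2}^n 1/(1 + a_i^2 t^2 / 2). -/
open Real

/-!
Fold `a₁` into the cosine product and induct on the remaining factors, keeping
`|∏ cos| ≤ 1` and `0 ≤ ∏ (1 + yᵢ²/2)⁻¹ ≤ 1` as invariants. Adding a factor `cos c` with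
`c²/2 ≤ A` costs at most the factor `(1 + c²/2)⁻¹` on the right: if the cosine product `P`
is nonpositive this is monotonicity, if `c²/2 > 1` the right side is at most `1` while the left
is at least `1 - c²/2 + A`, and otherwise `cos c ≥ 1 - c²/2 ≥ 0` reduces it to a polynomial
inequality.
-/

lemma le_cos_mul_add_of_le_add {P Q A c : ℝ} (hP : |P| ≤ 1) (hQ₀ : 0 ≤ Q) (hQ₁ : Q ≤ 1)
    (hQP : Q ≤ P + A) (hcA : c ^ 2 / 2 ≤ A) :
    Q * (1 + c ^ 2 / 2)⁻¹ ≤ cos c * P + A := by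
  set x := c ^ 2 / 2
  have hx₀ : 0 ≤ x := by positivity
  have hcos_le : cos c ≤ 1 := cos_le_one c
  have hcos_ge : 1 - x ≤ cos c := one_sub_sq_div_two_le_cos
  have hP₁ : P ≤ 1 := (le_abs_self P).trans hP
  have hR : (1 + x)⁻¹ * (1 + x) = 1 := inv_mul_cancel₀ (by positivity)
  have hR₁ : (1 + x)⁻¹ ≤ 1 := inv_le_one_of_one_le₀ (by linarith)
  have hQR : Q * (1 + x)⁻¹ ≤ Q := mul_le_of_le_one_right hQ₀ hR₁
  rcases le_or_gt P 0 with hP₀ | hP₀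
  · nlinarith
  rcases le_or_gt x 1 with hx₁ | hx₁
  · have hPcos : P * (1 - x) ≤ cos c * P := by nlinarith
    -- multiplied by `1 + x`, the claim becomes `x (A (1 + x) - Q x) ≥ 0`
    nlinarith [mul_nonneg hx₀ (sub_nonneg.2 hcA), mul_nonneg (mul_nonneg hx₀ hx₀) (sub_nonneg.2 hQ₁)]
  · nlinarith

theorem prod_inv_one_add_sq_div_two_le_cos_mul_prod_cos_add {ι : Type*} (y₀ : ℝ)
    (y : ι → ℝ) (s : Finset ι) (hy : ∀ i ∈ s, y i ^ 2 ≤ y₀ ^ 2) :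
    ∏ i ∈ s, (1 + y i ^ 2 / 2)⁻¹ ≤ cos y₀ * ∏ i ∈ s, cos (y i) + y₀ ^ 2 / 2 := by
  induction s using Finset.cons_induction with
  | empty =>
    have := one_sub_sq_div_two_le_cos (x := y₀)
    simp only [Finset.prod_empty, mul_one]
    linarith
  | cons j s hj ih =>
    rw [Finset.prod_cons, Finset.prod_cons, mul_comm, mul_left_comm]
    have hy' : ∀ i ∈ s, y i ^ 2 ≤ y₀ ^ 2 := fun i hi => hy i (Finset.mem_cons_of_mem hi)
    refine le_cos_mul_add_of_le_add ?_ ?_ ?_ (ih hy') (by linarith [hy j (Finset.mem_cons_self j s)])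
    · rw [abs_mul, Finset.abs_prod]
      exact mul_le_one₀ (abs_cos_le_one _) (Finset.prod_nonneg fun _ _ => abs_nonneg _)
        (Finset.prod_le_one (fun _ _ => abs_nonneg _) fun _ _ => abs_cos_le_one _)
    · exact Finset.prod_nonneg fun _ _ => by positivity
    · exact Finset.prod_le_one (fun _ _ => by positivity) fun _ _ =>
        inv_le_one_of_one_le₀ (le_add_of_nonneg_right (by positivity))

/-- if `|a₁| ≥ |a₂| ≥ … ≥ |aₙ|` then for every real `t`,
`∏_{i=1}^n cos(aᵢ t) + a₁² t² / 2 ≥ ∏_{i=2}^n 1/(1 + aᵢ² t² / 2)`. -/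
theorem stmt3 (n : ℕ) (hn : 1 ≤ n) (a : ℕ → ℝ)
    (hmono : ∀ i j, 1 ≤ i → i ≤ j → j ≤ n → |a j| ≤ |a i|) (t : ℝ) :
    (∏ i ∈ Finset.Icc 1 n, Real.cos (a i * t)) + (a 1) ^ 2 * t ^ 2 / 2 ≥
      ∏ i ∈ Finset.Icc 2 n, (1 + (a i) ^ 2 * t ^ 2 / 2)⁻¹ := by
  have hy : ∀ i ∈ Finset.Icc 2 n, (a i * t) ^ 2 ≤ (a 1 * t) ^ 2 := fun i hi => by
    obtain ⟨h2i, hin⟩ := Finset.mem_Icc.1 hi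
    rw [sq_le_sq, abs_mul, abs_mul]
    exact mul_le_mul_of_nonneg_right (hmono 1 i le_rfl (by omega) hin) (abs_nonneg t)
  have key := prod_inv_one_add_sq_div_two_le_cos_mul_prod_cos_add (a 1 * t) (fun i => a i * t)
    (Finset.Icc 2 n) hy
  rw [← Finset.mul_prod_Ioc_eq_prod_Icc hn, ← Finset.Icc_add_one_left_eq_Ioc, ge_iff_le]
  simp only [mul_pow] at key
  exact key
end

section
/- Let x_1,…,x_n be real numbers with 1 ≥ x_1 ≥ x_2 ≥ … ≥ x_n ≥ 0. Then ∏_{i=1}^n (1 − x_i) + x_1 ≥ ∏_{i=2}^n 1/(1 + x_i). -/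
open Finset

/- The induction step: clearing the denominator, this is `P t² ≤ t² ≤ a t`. -/
lemma add_mul_inv_one_add_le {P a t : ℝ} (hP : P ≤ 1) (ht : 0 ≤ t) (hta : t ≤ a) :
    (P + a) * (1 + t)⁻¹ ≤ P * (1 - t) + a := by
  rw [← div_eq_mul_inv, div_le_iff₀ (by linarith)]
  nlinarith [mul_le_mul_of_nonneg_right hP (sq_nonneg t), mul_le_mul_of_nonneg_left hta ht]

/-- if `1 ≥ x₁ ≥ x₂ ≥ … ≥ xₙ ≥ 0` then
`∏_{i=1}^n (1 - xᵢ) + x₁ ≥ ∏_{i=2}^n 1/(1 + xᵢ)`. -/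
theorem stmt4 (n : ℕ) (hn : 1 ≤ n) (x : ℕ → ℝ)
    (hle : ∀ i ∈ Finset.Icc 1 n, x i ≤ 1)
    (hnonneg : ∀ i ∈ Finset.Icc 1 n, 0 ≤ x i)
    (hmono : ∀ i j, 1 ≤ i → i ≤ j → j ≤ n → x j ≤ x i) :
    (∏ i ∈ Finset.Icc 1 n, (1 - x i)) + x 1 ≥ ∏ i ∈ Finset.Icc 2 n, (1 + x i)⁻¹ := by
  induction n, hn using Nat.le_induction with
  | base => simp
  | succ n hn ih =>
    have hsub : Icc 1 n ⊆ Icc 1 (n + 1) := Icc_subset_Icc_right n.le_succ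
    have hlast : n + 1 ∈ Icc 1 (n + 1) := mem_Icc.2 ⟨by omega, le_rfl⟩
    have hP : ∏ i ∈ Icc 1 n, (1 - x i) ≤ 1 :=
      prod_le_one (fun i hi => sub_nonneg.2 (hle i (hsub hi)))
        (fun i hi => sub_le_self _ (hnonneg i (hsub hi)))
    have ih := ih (fun i hi => hle i (hsub hi)) (fun i hi => hnonneg i (hsub hi))
      (fun i j hi hij hj => hmono i j hi hij (by omega))
    rw [prod_Icc_succ_top (by omega), prod_Icc_succ_top (by omega)]
    calc (∏ i ∈ Icc 2 n, (1 + x i)⁻¹) * (1 + x (n + 1))⁻¹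
        ≤ ((∏ i ∈ Icc 1 n, (1 - x i)) + x 1) * (1 + x (n + 1))⁻¹ :=
          mul_le_mul_of_nonneg_right ih (by have := hnonneg _ hlast; positivity)
      _ ≤ (∏ i ∈ Icc 1 n, (1 - x i)) * (1 - x (n + 1)) + x 1 :=
          add_mul_inv_one_add_le hP (hnonneg _ hlast) (hmono 1 (n + 1) le_rfl (by omega) le_rfl)
end

section
/- Let ε be a Rademacher random variable (taking values ±1 with probability 1/2 each). Then for all real numbers a, b and every real p ≥ 3: E|aε + b|^p ≥ |b|^p + (p(p−1)/2) a^2 |b|^{p−2}. Equivalently, (|a+b|^p + |−a+b|^p)/2 ≥ |b|^p + (p(p−1)/2) a^2 |b|^{p−2}. -/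
open MeasureTheory ProbabilityTheory Real
open scoped ENNReal

/-!
The expectation equals `(|b + a|^p + |b - a|^p) / 2`. For fixed `b`, the function
`g x = |b + x|^p + |b - x|^p - p(p-1)|b|^(p-2) x²` has derivative
`G x = p (ψ(b + x) - ψ(b - x)) - 2p(p-1)|b|^(p-2) x` with `ψ t = |t|^(p-2) t`, and
`G' x = p(p-1) (|b + x|^(p-2) + |b - x|^(p-2) - 2|b|^(p-2)) ≥ 0` because `t ↦ |t|^(p-2)` is
convex for `p ≥ 3`. So `G` is monotone and vanishes at `0`, hence `g` is minimal at `0`,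
where it equals `2|b|^p`.
-/

open Filter Topology

theorem hasDerivAt_abs_rpow_mul_self {q : ℝ} (hq : 0 < q) (x : ℝ) :
    HasDerivAt (fun t : ℝ ↦ |t| ^ q * t) ((q + 1) * |x| ^ q) x := by
  rcases eq_or_ne x 0 with rfl | hx
  · have hcont : Tendsto (fun t : ℝ ↦ |t| ^ q) (𝓝[≠] 0) (𝓝 0) := by
      have := (continuous_abs.rpow_const fun _ ↦ Or.inr hq.le).tendsto (0 : ℝ)
      simpa [zero_rpow hq.ne'] using this.mono_left nhdsWithin_le_nhds
    rw [hasDerivAt_iff_tendsto_slope, abs_zero, zero_rpow hq.ne', mul_zero]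
    refine hcont.congr' (eventually_nhdsWithin_of_forall fun t ht ↦ ?_)
    rw [slope_def_field, abs_zero, zero_rpow hq.ne', zero_mul, sub_zero, sub_zero,
      mul_div_cancel_right₀ _ ht]
  · refine (((hasDerivAt_abs hx).rpow_const (Or.inl (abs_ne_zero.2 hx))).mul
      (hasDerivAt_id x)).congr_deriv ?_
    have hsign : (SignType.sign x : ℝ) * x = |x| := sign_mul_self x
    rw [id_eq, rpow_sub_one (abs_ne_zero.2 hx)]
    field_simp
    linear_combination q * hsign

theorem two_mul_abs_rpow_le_abs_add_rpow_add_abs_sub_rpow {r : ℝ} (hr : 1 ≤ r) (b x : ℝ) :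
    2 * |b| ^ r ≤ |b + x| ^ r + |b - x| ^ r := by
  have hmid : |b| ≤ 1 / 2 * |b + x| + 1 / 2 * |b - x| := by
    have := abs_add_le (b + x) (b - x)
    rw [add_add_sub_cancel, ← two_mul, abs_mul, abs_two] at this
    linarith
  have hconv := (convexOn_rpow hr).2 (Set.mem_Ici.2 (abs_nonneg (b + x)))
    (Set.mem_Ici.2 (abs_nonneg (b - x))) (by norm_num : (0 : ℝ) ≤ 1 / 2)
    (by norm_num : (0 : ℝ) ≤ 1 / 2) (by norm_num)
  simp only [smul_eq_mul] at hconv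
  calc 2 * |b| ^ r ≤ 2 * (1 / 2 * |b + x| + 1 / 2 * |b - x|) ^ r := by gcongr
    _ ≤ 2 * (1 / 2 * |b + x| ^ r + 1 / 2 * |b - x| ^ r) := by gcongr
    _ = |b + x| ^ r + |b - x| ^ r := by ring

theorem le_of_hasDerivAt_of_monotone_of_eq_zero {f f' : ℝ → ℝ}
    (hf : ∀ x, HasDerivAt f (f' x) x) (hf' : Monotone f') {x₀ : ℝ} (hx₀ : f' x₀ = 0) (x : ℝ) :
    f x₀ ≤ f x := by
  have hcont : Continuous f := continuous_iff_continuousAt.2 fun x ↦ (hf x).continuousAt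
  rcases le_total x₀ x with h | h
  · refine monotoneOn_of_hasDerivWithinAt_nonneg (convex_Ici x₀) hcont.continuousOn
      (fun y _ ↦ (hf y).hasDerivWithinAt) (fun y hy ↦ ?_) Set.self_mem_Ici h h
    rw [interior_Ici] at hy
    exact hx₀ ▸ hf' hy.le
  · refine antitoneOn_of_hasDerivWithinAt_nonpos (convex_Iic x₀) hcont.continuousOn
      (fun y _ ↦ (hf y).hasDerivWithinAt) (fun y hy ↦ ?_) h Set.self_mem_Iic h
    rw [interior_Iic] at hy
    exact hx₀ ▸ hf' hy.le

theorem two_mul_abs_rpow_add_mul_sq_le {p : ℝ} (hp : 3 ≤ p) (a b : ℝ) :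
    2 * |b| ^ p + p * (p - 1) * |b| ^ (p - 2) * a ^ 2 ≤ |b + a| ^ p + |b - a| ^ p := by
  let g x := |b + x| ^ p + |b - x| ^ p - p * (p - 1) * |b| ^ (p - 2) * x ^ 2
  let G x := p * (|b + x| ^ (p - 2) * (b + x) - |b - x| ^ (p - 2) * (b - x)) -
    p * (p - 1) * |b| ^ (p - 2) * (2 * x)
  have hg : ∀ x, HasDerivAt g (G x) x := fun x ↦ by
    have hplus := (hasDerivAt_abs_rpow (b + x) (by linarith)).comp x
      ((hasDerivAt_id x).const_add b)
    have hminus := (hasDerivAt_abs_rpow (b - x) (by linarith)).comp x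
      ((hasDerivAt_id x).const_sub b)
    refine ((hplus.add hminus).sub
      ((hasDerivAt_pow 2 x).const_mul (p * (p - 1) * |b| ^ (p - 2)))).congr_deriv ?_
    simp only [G]
    ring
  have hG : ∀ x, HasDerivAt G
      (p * (p - 1) * (|b + x| ^ (p - 2) + |b - x| ^ (p - 2) - 2 * |b| ^ (p - 2))) x := fun x ↦ by
    have hq : 0 < p - 2 := by linarith
    have hplus := (hasDerivAt_abs_rpow_mul_self hq (b + x)).comp x
      ((hasDerivAt_id x).const_add b)
    have hminus := (hasDerivAt_abs_rpow_mul_self hq (b - x)).comp x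
      ((hasDerivAt_id x).const_sub b)
    refine (((hplus.sub hminus).const_mul p).sub
      (((hasDerivAt_id x).const_mul 2).const_mul (p * (p - 1) * |b| ^ (p - 2)))).congr_deriv ?_
    ring
  have hGmono : Monotone G := monotone_of_hasDerivAt_nonneg hG fun x ↦
    mul_nonneg (by nlinarith) <| sub_nonneg.2 <|
      two_mul_abs_rpow_le_abs_add_rpow_add_abs_sub_rpow (by linarith) b x
  have := le_of_hasDerivAt_of_monotone_of_eq_zero hg hGmono (x₀ := 0) (by simp [G]) a
  simp only [g, add_zero, sub_zero] at this
  linarith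

section Rademacher

variable {E : Type*} [NormedAddCommGroup E]

theorem integrable_rademacherLaw (f : ℝ → E) : Integrable f rademacherLaw :=
  ((integrable_dirac enorm_lt_top).smul_measure (by simp)).add_measure
    ((integrable_dirac enorm_lt_top).smul_measure (by simp))

variable [NormedSpace ℝ E] [CompleteSpace E]

theorem integral_rademacherLaw (f : ℝ → E) :
    ∫ x, f x ∂rademacherLaw = (2 : ℝ)⁻¹ • (f 1 + f (-1)) := by
  rw [rademacherLaw, integral_add_measure, integral_smul_measure, integral_smul_measure,
    integral_dirac, integral_dirac, smul_add]
  · simp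
  · exact (integrable_rademacherLaw f).mono_measure (Measure.le_add_right le_rfl)
  · exact (integrable_rademacherLaw f).mono_measure (Measure.le_add_left le_rfl)

theorem integral_comp_of_map_eq_rademacherLaw {Ω : Type*} [MeasurableSpace Ω] {μ : Measure Ω}
    {ε : Ω → ℝ} (hε : AEMeasurable ε μ) (hlaw : μ.map ε = rademacherLaw) (f : ℝ → E) :
    ∫ ω, f (ε ω) ∂μ = (2 : ℝ)⁻¹ • (f 1 + f (-1)) := by
  rw [← integral_map hε (hlaw ▸ (integrable_rademacherLaw f).aestronglyMeasurable), hlaw,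
    integral_rademacherLaw]

end Rademacher

theorem stmt9_general
    {Ω : Type*} [MeasurableSpace Ω] (μ : Measure Ω)
    (ε : Ω → ℝ) (hεmeas : Measurable ε) (hεlaw : Measure.map ε μ = rademacherLaw)
    (a b : ℝ) (p : ℝ) (hp : 3 ≤ p) :
    ∫ ω, |a * ε ω + b| ^ p ∂μ ≥ |b| ^ p + (p * (p - 1) / 2) * a ^ 2 * |b| ^ (p - 2) := by
  rw [integral_comp_of_map_eq_rademacherLaw hεmeas.aemeasurable hεlaw (fun x ↦ |a * x + b| ^ p),
    smul_eq_mul, mul_one, mul_neg_one, add_comm a, neg_add_eq_sub]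
  linarith [two_mul_abs_rpow_add_mul_sq_le hp a b]

/-- for `ε` Rademacher, all reals `a, b` and `p ≥ 3`,
`E|aε + b|^p ≥ |b|^p + (p(p-1)/2) a² |b|^{p-2}`; equivalently
`(|a+b|^p + |-a+b|^p)/2 ≥ |b|^p + (p(p-1)/2) a² |b|^{p-2}`. -/
theorem stmt9
    {Ω : Type*} [MeasurableSpace Ω] (μ : Measure Ω) [IsProbabilityMeasure μ]
    (ε : Ω → ℝ) (hεmeas : Measurable ε) (hεlaw : Measure.map ε μ = rademacherLaw)
    (a b : ℝ) (p : ℝ) (hp : 3 ≤ p) :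
    ∫ ω, |a * ε ω + b| ^ p ∂μ ≥ |b| ^ p + (p * (p - 1) / 2) * a ^ 2 * |b| ^ (p - 2) :=
  stmt9_general μ ε hεmeas hεlaw a b p hp
end
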